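/- arXiv:2310.18506 — 4 statements merged into one kernel-verified Lean document; each statement's English description precedes it below -/
import Mathlib

section
/- Let X be a metric space, Z ⊆ X, π : X → Z an (A,B)-coarsely Lipschitz projection, and K > 0. Suppose x, z ∈ X and y lies on a geodesic from x to z (i.e., d(x,y) + d(y,z) = d(x,z)). If d(π(x), π(y)) < K, d(π(y), π(z)) < K, and both d(x,Z) and d(z,Z) are at most d(y,Z)/(8(A+1)), then d(y, Z) ≤ 2K + 16B. -/
theorem stmt_3 {X : Type*} [MetricSpace X] (Z : Set X) (hZ : Z.Nonempty)
    (π : X → X) (A B K : ℝ) (hA : 0 < A) (hB : 0 < B) (hK : 0 < K)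
    (hrange : ∀ x, π x ∈ Z)
    (hlip : ∀ x y, dist (π x) (π y) ≤ A * dist x y + B)
    (hproj : ∀ z ∈ Z, dist (π z) z ≤ B)
    (x y z : X) (hgeo : dist x y + dist y z = dist x z)
    (h1 : dist (π x) (π y) < K) (h2 : dist (π y) (π z) < K)
    (h3 : Metric.infDist x Z ≤ Metric.infDist y Z / (8 * (A + 1)))
    (h4 : Metric.infDist z Z ≤ Metric.infDist y Z / (8 * (A + 1))) :
    Metric.infDist y Z ≤ 2 * K + 16 * B := by
  have hA1 : (0:ℝ) < A + 1 := by linarith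
  have key : ∀ w : X, dist w (π w) ≤ (A + 1) * Metric.infDist w Z + 2 * B := by
    intro w
    by_contra h
    push_neg at h
    have hlt : Metric.infDist w Z < (dist w (π w) - 2 * B) / (A + 1) := by
      rw [lt_div_iff₀ hA1]; nlinarith
    obtain ⟨v, hv, hdv⟩ := (Metric.infDist_lt_iff hZ).1 hlt
    have l1 := hlip w v
    have l2 := hproj v hv
    have t4 := dist_triangle4 w v (π v) (π w)
    rw [dist_comm v (π v), dist_comm (π v) (π w)] at t4
    rw [lt_div_iff₀ hA1] at hdv
    nlinarith
  have kx := key x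
  have kz := key z
  have lx : Metric.infDist y Z - Metric.infDist x Z ≤ dist x y := by
    have := Metric.infDist_le_infDist_add_dist (x := y) (y := x) (s := Z)
    rw [dist_comm y x] at this; linarith
  have lz : Metric.infDist y Z - Metric.infDist z Z ≤ dist y z := by
    have := Metric.infDist_le_infDist_add_dist (x := y) (y := z) (s := Z)
    linarith
  have tri : dist x z ≤ dist x (π x) + dist (π x) (π y) + dist (π y) (π z) + dist (π z) z := by
    have a := dist_triangle4 x (π x) (π y) z
    have b := dist_triangle (π y) (π z) z
    linarith
  have hpz : dist (π z) z = dist z (π z) := dist_comm _ _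
  have hx3 : Metric.infDist x Z * (8 * (A + 1)) ≤ Metric.infDist y Z := by
    rw [← le_div_iff₀ (by positivity)] at *; exact h3
  have hz4 : Metric.infDist z Z * (8 * (A + 1)) ≤ Metric.infDist y Z := by
    rw [← le_div_iff₀ (by positivity)] at *; exact h4
  have hxnn : 0 ≤ Metric.infDist x Z := Metric.infDist_nonneg
  have hznn : 0 ≤ Metric.infDist z Z := Metric.infDist_nonneg
  have hynn : 0 ≤ Metric.infDist y Z := Metric.infDist_nonneg
  nlinarith [mul_nonneg hxnn hA1.le, mul_nonneg hznn hA1.le]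
end

section
/- Let α : [0,M] → X and β : [0,M'] → X be (q,Q)-quasi-geodesics in a metric space X, suppose α is contained in the K-neighborhood of β, and there exist 0 ≤ m < n ≤ M' with d(α(0), β(m)) < K and d(α(M), β(n)) < K. Then the Hausdorff distance between the images of α and β|_{[m,n]} is at most K + Q + 6q⁶Q + 2Kq⁵. -/
set_option maxHeartbeats 1000000
open Set Metric

private lemma par_le {q Q d A : ℝ} (hq : 1 ≤ q) (h : 1/q * A - Q ≤ d) : A ≤ q*(d+Q) := by
  have hq0 : (0:ℝ) < q := by linarith
  have h2 : 1/q * A ≤ d + Q := by linarith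
  have h3 := mul_le_mul_of_nonneg_left h2 hq0.le
  calc A = q*(1/q*A) := by field_simp
  _ ≤ q*(d+Q) := h3

private lemma qpow {q : ℝ} (hq : 1 ≤ q) {a b : ℕ} (h : a ≤ b) : q^a ≤ q^b :=
  pow_le_pow_right₀ hq h

private lemma endgame {X : Type*} [MetricSpace X] (q Q K M M' m n t x' s' ε : ℝ)
    (hq : 1 ≤ q) (hQ : 0 ≤ Q) (hK : 0 < K) (hε : 0 < ε)
    (α β : ℝ → X)
    (hα : ∀ s ∈ Set.Icc (0:ℝ) M, ∀ t ∈ Set.Icc (0:ℝ) M,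
      (1 / q) * |s - t| - Q ≤ dist (α s) (α t) ∧ dist (α s) (α t) ≤ q * |s - t| + Q)
    (hβ : ∀ s ∈ Set.Icc (0:ℝ) M', ∀ t ∈ Set.Icc (0:ℝ) M',
      (1 / q) * |s - t| - Q ≤ dist (β s) (β t) ∧ dist (β s) (β t) ≤ q * |s - t| + Q)
    (hm : 0 ≤ m) (hmn : m < n) (hn : n ≤ M')
    (h0 : dist (α 0) (β m) < K) (h1 : dist (α M) (β n) < K)
    (ht : t ∈ Set.Icc 0 M) (hx' : x' ∈ Set.Icc 0 M)
    (hs'l : m ≤ s') (hs'M : s' ≤ M')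
    (hs'J : s' ≤ m + (q*(2*K+2*Q) + 5*q^2*ε))
    (hd : dist (α x') (β s') < K + 2*ε)
    (hdist : |t - x'| ≤ (2*q*K+2*q*Q + q^2*(q*(2*K+2*Q) + 5*q^2*ε) + 10*q^2*ε)/2) :
    Metric.infDist (α t) (β '' Set.Icc m n) ≤ K + 2*Q + (q^2+q^4)*(K+Q) + 10*q^5*ε := by
  have hq0 : (0:ℝ) < q := by linarith
  have hq35 : q^3 ≤ q^5 := qpow hq (by norm_num)
  have h15 : 1 ≤ q^5 := one_le_pow₀ hq
  have e1 : q^3*ε ≤ q^5*ε := mul_le_mul_of_nonneg_right hq35 hε.le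
  have e2 : ε ≤ q^5*ε := by
    calc ε = 1*ε := (one_mul ε).symm
    _ ≤ q^5*ε := mul_le_mul_of_nonneg_right h15 hε.le
  have hM0 : (0:ℝ) ≤ M := le_trans ht.1 ht.2
  have hqtx : q * |t - x'| ≤ q^2*K + q^2*Q + q^4*K + q^4*Q + (5/2)*q^5*ε + 5*q^3*ε := by
    calc q * |t - x'| ≤ q*((2*q*K+2*q*Q + q^2*(q*(2*K+2*Q) + 5*q^2*ε) + 10*q^2*ε)/2) :=
          mul_le_mul_of_nonneg_left hdist hq0.le
    _ = q^2*K + q^2*Q + q^4*K + q^4*Q + (5/2)*q^5*ε + 5*q^3*ε := by ring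
  have htx : dist (α t) (α x') ≤ q^2*K + q^2*Q + q^4*K + q^4*Q + (5/2)*q^5*ε + 5*q^3*ε + Q := by
    have h2 := (hα t ht x' hx').2
    linarith
  by_cases hsn : s' ≤ n
  · have mem : β s' ∈ β '' Set.Icc m n := ⟨s', ⟨hs'l, hsn⟩, rfl⟩
    have h2 := Metric.infDist_le_dist_of_mem (x := α t) mem
    have h3 : dist (α t) (β s') ≤ dist (α t) (α x') + dist (α x') (β s') := dist_triangle _ _ _
    linarith [e1, e2]
  · push_neg at hsn
    have hnm : n - m ≤ q*(2*K+2*Q) + 5*q^2*ε := by linarith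
    have hβmn : dist (β m) (β n) ≤ q*(n-m) + Q := by
      have h2 := (hβ m ⟨hm, by linarith⟩ n ⟨by linarith, hn⟩).2
      rwa [show |m - n| = n - m by rw [abs_sub_comm]; exact abs_of_nonneg (by linarith)] at h2
    have hα0M : dist (α 0) (α M) ≤ K + (q*(n-m)+Q) + K := by
      calc dist (α 0) (α M) ≤ dist (α 0) (β m) + dist (β m) (β n) + dist (β n) (α M) :=
              dist_triangle4 _ _ _ _
        _ ≤ K + (q*(n-m)+Q) + K := by
              rw [dist_comm (β n) (α M)]; linarith
    have hMle : M ≤ q*(dist (α 0) (α M) + Q) := by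
      have h2 := (hα 0 ⟨le_refl 0, hM0⟩ M ⟨hM0, le_refl M⟩).1
      have h3 : |(0:ℝ) - M| = M := by rw [zero_sub, abs_neg]; exact abs_of_nonneg hM0
      exact par_le hq (by rw [h3] at h2; exact h2)
    have hMb : M ≤ 2*q*K + 2*q*Q + q^2*(n-m) := by
      calc M ≤ q*(dist (α 0) (α M) + Q) := hMle
      _ ≤ q*((K + (q*(n-m)+Q) + K) + Q) :=
          mul_le_mul_of_nonneg_left (by linarith) hq0.le
      _ = 2*q*K + 2*q*Q + q^2*(n-m) := by ring
    have hMb2 : M ≤ 2*q*K+2*q*Q + 2*q^3*K + 2*q^3*Q + 5*q^4*ε := by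
      have h2 : q^2*(n-m) ≤ q^2*(q*(2*K+2*Q) + 5*q^2*ε) :=
        mul_le_mul_of_nonneg_left hnm (by positivity)
      calc M ≤ 2*q*K + 2*q*Q + q^2*(n-m) := hMb
      _ ≤ 2*q*K+2*q*Q + q^2*(q*(2*K+2*Q) + 5*q^2*ε) := by linarith
      _ = 2*q*K+2*q*Q + 2*q^3*K + 2*q^3*Q + 5*q^4*ε := by ring
    have hqM : q*M ≤ 2*q^2*K+2*q^2*Q+2*q^4*K+2*q^4*Q+5*q^5*ε := by
      calc q*M ≤ q*(2*q*K+2*q*Q + 2*q^3*K + 2*q^3*Q + 5*q^4*ε) :=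
          mul_le_mul_of_nonneg_left hMb2 hq0.le
      _ = 2*q^2*K+2*q^2*Q+2*q^4*K+2*q^4*Q+5*q^5*ε := by ring
    by_cases htm : t ≤ M/2
    · have mem : β m ∈ β '' Set.Icc m n := ⟨m, ⟨le_refl m, hmn.le⟩, rfl⟩
      have h2 := Metric.infDist_le_dist_of_mem (x := α t) mem
      have h3 : dist (α t) (β m) ≤ dist (α t) (α 0) + dist (α 0) (β m) := by
        rw [dist_comm (α t) (α 0)]; exact dist_triangle_left _ _ _
      have h4 : dist (α t) (α 0) ≤ q*t + Q := by
        have h5 := (hα t ht 0 ⟨le_refl 0, hM0⟩).2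
        rwa [show |t - 0| = t by rw [sub_zero]; exact abs_of_nonneg ht.1] at h5
      have h6 : q*t ≤ q*(M/2) := mul_le_mul_of_nonneg_left htm hq0.le
      linarith [e1, e2]
    · push_neg at htm
      have mem : β n ∈ β '' Set.Icc m n := ⟨n, ⟨hmn.le, le_refl n⟩, rfl⟩
      have h2 := Metric.infDist_le_dist_of_mem (x := α t) mem
      have h3 : dist (α t) (β n) ≤ dist (α t) (α M) + dist (α M) (β n) := dist_triangle _ _ _
      have h4 : dist (α t) (α M) ≤ q*(M-t) + Q := by
        have h5 := (hα t ht M ⟨hM0, le_refl M⟩).2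
        rwa [show |t - M| = M - t by rw [abs_sub_comm]; exact abs_of_nonneg (by linarith [ht.2])] at h5
      have h6 : q*(M-t) ≤ q*(M/2) := mul_le_mul_of_nonneg_left (by linarith) hq0.le
      linarith [e1, e2]
private lemma core {X : Type*} [MetricSpace X] (q Q K M M' : ℝ)
    (hq : 1 ≤ q) (hQ : 0 ≤ Q) (hK : 0 < K)
    (α β : ℝ → X)
    (hα : ∀ s ∈ Set.Icc (0:ℝ) M, ∀ t ∈ Set.Icc (0:ℝ) M,
      (1 / q) * |s - t| - Q ≤ dist (α s) (α t) ∧ dist (α s) (α t) ≤ q * |s - t| + Q)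
    (hβ : ∀ s ∈ Set.Icc (0:ℝ) M', ∀ t ∈ Set.Icc (0:ℝ) M',
      (1 / q) * |s - t| - Q ≤ dist (β s) (β t) ∧ dist (β s) (β t) ≤ q * |s - t| + Q)
    (hnbd : ∀ t ∈ Set.Icc (0:ℝ) M, Metric.infDist (α t) (β '' Set.Icc (0:ℝ) M') ≤ K)
    (m n : ℝ) (hm : 0 ≤ m) (hmn : m < n) (hn : n ≤ M')
    (h0 : dist (α 0) (β m) < K) (h1 : dist (α M) (β n) < K)
    (t : ℝ) (ht : t ∈ Set.Icc 0 M) (ε : ℝ) (hε : 0 < ε)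
    (hbad : K + ε < Metric.infDist (α t) (β '' Set.Icc m M')) :
    Metric.infDist (α t) (β '' Set.Icc m n) ≤ K + 2*Q + (q^2+q^4)*(K+Q) + 10*q^5*ε := by
  have hq0 : (0:ℝ) < q := by linarith
  have hmM' : m ≤ M' := le_of_lt (lt_of_lt_of_le hmn hn)
  have hM'0 : (0:ℝ) ≤ M' := le_trans hm hmM'
  have hM0 : (0:ℝ) ≤ M := le_trans ht.1 ht.2
  have hne_mM' : (β '' Set.Icc m M').Nonempty := ⟨β m, m, ⟨le_refl m, hmM'⟩, rfl⟩
  have hne_0M' : (β '' Set.Icc (0:ℝ) M').Nonempty := ⟨β m, m, ⟨hm, hmM'⟩, rfl⟩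
  have hq35 : q^3 ≤ q^5 := qpow hq (by norm_num)
  have hq25 : q^2 ≤ q^5 := qpow hq (by norm_num)
  have hq15 : q ≤ q^5 := by
    calc q = q^1 := (pow_one q).symm
    _ ≤ q^5 := qpow hq (by norm_num)
  have h15 : 1 ≤ q^5 := one_le_pow₀ hq
  have hq24 : q^2 ≤ q^4 := qpow hq (by norm_num)
  have hq12 : q ≤ q^2 := by
    calc q = q^1 := (pow_one q).symm
    _ ≤ q^2 := qpow hq (by norm_num)
  have e1 : q^3*ε ≤ q^5*ε := mul_le_mul_of_nonneg_right hq35 hε.le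
  have e2 : ε ≤ q^5*ε := by
    calc ε = 1*ε := (one_mul ε).symm
    _ ≤ q^5*ε := mul_le_mul_of_nonneg_right h15 hε.le
  have e3 : q^2*ε ≤ q^5*ε := mul_le_mul_of_nonneg_right hq25 hε.le
  have e4 : q*ε ≤ q^5*ε := mul_le_mul_of_nonneg_right hq15 hε.le
  -- the two sets
  set S1 : Set ℝ := {x : ℝ | (0 ≤ x ∧ x ≤ t) ∧ Metric.infDist (α x) (β '' Set.Icc m M') ≤ K + ε}
    with hS1def
  set S2 : Set ℝ := {x : ℝ | (t ≤ x ∧ x ≤ M) ∧ Metric.infDist (α x) (β '' Set.Icc m M') ≤ K + ε}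
    with hS2def
  have h0S1 : (0:ℝ) ∈ S1 := by
    refine ⟨⟨le_refl 0, ht.1⟩, ?_⟩
    have h2 : Metric.infDist (α 0) (β '' Set.Icc m M') ≤ dist (α 0) (β m) :=
      Metric.infDist_le_dist_of_mem ⟨m, ⟨le_refl m, hmM'⟩, rfl⟩
    linarith
  have hMS2 : M ∈ S2 := by
    refine ⟨⟨ht.2, le_refl M⟩, ?_⟩
    have h2 : Metric.infDist (α M) (β '' Set.Icc m M') ≤ dist (α M) (β n) :=
      Metric.infDist_le_dist_of_mem ⟨n, ⟨hmn.le, hn⟩, rfl⟩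
    linarith
  have bdd1 : BddAbove S1 := ⟨t, fun x hx => hx.1.2⟩
  have bdd2 : BddBelow S2 := ⟨t, fun x hx => hx.1.1⟩
  set T1 := sSup S1 with hT1def
  set T2 := sInf S2 with hT2def
  have hT1le : T1 ≤ t := csSup_le ⟨0, h0S1⟩ (fun x hx => hx.1.2)
  have hT1ge : 0 ≤ T1 := le_csSup bdd1 h0S1
  have hT2ge : t ≤ T2 := le_csInf ⟨M, hMS2⟩ (fun x hx => hx.1.1)
  have hT2le : T2 ≤ M := csInf_le bdd2 hMS2
  -- between the crossings, α is K+ε-close to β on [0,m]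
  have hbetween : ∀ y, T1 < y → y < T2 →
      ∃ r, (0 ≤ r ∧ r ≤ m) ∧ dist (α y) (β r) < K + ε := by
    intro y hy1 hy2
    have hy : y ∈ Set.Icc (0:ℝ) M := ⟨le_trans hT1ge hy1.le, le_trans hy2.le hT2le⟩
    have h5 : Metric.infDist (α y) (β '' Set.Icc (0:ℝ) M') < K + ε :=
      lt_of_le_of_lt (hnbd y hy) (by linarith)
    obtain ⟨z, hzmem, hzd⟩ := (Metric.infDist_lt_iff hne_0M').1 h5
    obtain ⟨s, hsmem, rfl⟩ := hzmem
    rcases le_or_gt m s with hms | hms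
    · exfalso
      have h6 : Metric.infDist (α y) (β '' Set.Icc m M') ≤ K + ε :=
        le_of_lt (lt_of_le_of_lt (Metric.infDist_le_dist_of_mem ⟨s, ⟨hms, hsmem.2⟩, rfl⟩) hzd)
      rcases le_total y t with hyt | hyt
      · have : y ∈ S1 := ⟨⟨hy.1, hyt⟩, h6⟩
        have := le_csSup bdd1 this
        linarith
      · have : y ∈ S2 := ⟨⟨hyt, hy.2⟩, h6⟩
        have := csInf_le bdd2 this
        linarith
    · exact ⟨s, ⟨hsmem.1, hms.le⟩, hzd⟩
  -- get x1 ∈ S1 with T1 - ε < x1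
  obtain ⟨x1, hx1S, hx1gt⟩ := exists_lt_of_lt_csSup ⟨0, h0S1⟩ (show T1 - ε < T1 by linarith)
  have hx1le : x1 ≤ T1 := le_csSup bdd1 hx1S
  have hx1Icc : x1 ∈ Set.Icc (0:ℝ) M := ⟨hx1S.1.1, le_trans hx1S.1.2 ht.2⟩
  obtain ⟨z1, hz1mem, hz1d⟩ := (Metric.infDist_lt_iff hne_mM').1
    (lt_of_le_of_lt hx1S.2 (show K + ε < K + 2*ε by linarith))
  obtain ⟨s1, hs1mem, rfl⟩ := hz1mem
  have hs1Icc : s1 ∈ Set.Icc (0:ℝ) M' := ⟨le_trans hm hs1mem.1, hs1mem.2⟩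
  rcases eq_or_lt_of_le (le_trans hT1le hT2ge) with hT12 | hT12
  · -- T1 = T2 = t
    have ht1 : T1 = t := le_antisymm hT1le (hT12 ▸ hT2ge)
    have htx1 : dist (α t) (α x1) ≤ q*ε + Q := by
      have h2 := (hα t ht x1 hx1Icc).2
      have h3 : |t - x1| = t - x1 := abs_of_nonneg (by linarith)
      have h4 : q*(t-x1) ≤ q*ε := mul_le_mul_of_nonneg_left (by linarith) hq0.le
      rw [h3] at h2; linarith
    have hts1 : dist (α t) (β s1) ≤ K + Q + q*ε + 2*ε := by
      have h2 : dist (α t) (β s1) ≤ dist (α t) (α x1) + dist (α x1) (β s1) := dist_triangle _ _ _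
      linarith
    rcases le_or_gt s1 n with hs1n | hs1n
    · have h2 := Metric.infDist_le_dist_of_mem (x := α t)
        (Set.mem_image_of_mem β (Set.mem_Icc.mpr ⟨hs1mem.1, hs1n⟩))
      have hKQ0 : (0:ℝ) ≤ (q^2+q^4)*(K+Q) := by positivity
      linarith only [e4, e2, hKQ0, h2, hts1, hQ, hε]
    · -- s1 > n : get the witness s_t ≤ m for t itself
      have h6 : Metric.infDist (α t) (β '' Set.Icc (0:ℝ) M') < K + ε :=
        lt_of_le_of_lt (hnbd t ht) (by linarith)
      obtain ⟨z2, hz2mem, hz2d⟩ := (Metric.infDist_lt_iff hne_0M').1 h6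
      obtain ⟨st, hstmem, rfl⟩ := hz2mem
      have hstm : st ≤ m := by
        by_contra hc
        push_neg at hc
        have : Metric.infDist (α t) (β '' Set.Icc m M') ≤ dist (α t) (β st) :=
          Metric.infDist_le_dist_of_mem ⟨st, ⟨hc.le, hstmem.2⟩, rfl⟩
        linarith
      have hd1 : dist (β s1) (β st) ≤ 2*K + Q + q*ε + 3*ε := by
        have h2 : dist (β s1) (β st) ≤ dist (β s1) (α t) + dist (α t) (β st) :=
          dist_triangle _ _ _
        rw [dist_comm (β s1) (α t)] at h2
        linarith
      have hparam : s1 - st ≤ q*(2*K + 2*Q + q*ε + 3*ε) := by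
        have h2 := (hβ s1 hs1Icc st hstmem).1
        have h3 : |s1 - st| = s1 - st := abs_of_nonneg (by linarith)
        have h4 := par_le hq (h3 ▸ h2)
        calc s1 - st ≤ q*(dist (β s1) (β st) + Q) := h4
        _ ≤ q*(2*K + 2*Q + q*ε + 3*ε) := mul_le_mul_of_nonneg_left (by linarith) hq0.le
      have hs1n' : dist (β s1) (β n) ≤ q*(s1-n) + Q := by
        have h2 := (hβ s1 hs1Icc n ⟨by linarith, hn⟩).2
        rwa [show |s1 - n| = s1 - n from abs_of_nonneg (by linarith)] at h2
      have hq1 : q*(s1-n) ≤ q*(q*(2*K + 2*Q + q*ε + 3*ε)) := by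
        apply mul_le_mul_of_nonneg_left _ hq0.le
        linarith
      have hfin : dist (α t) (β n) ≤ dist (α t) (β s1) + dist (β s1) (β n) := dist_triangle _ _ _
      have h2 := Metric.infDist_le_dist_of_mem (x := α t)
        (Set.mem_image_of_mem β (Set.mem_Icc.mpr ⟨hmn.le, le_refl n⟩))
      have hexp : q*(q*(2*K + 2*Q + q*ε + 3*ε)) = 2*q^2*K + 2*q^2*Q + q^3*ε + 3*q^2*ε := by ring
      have hKQ : 2*q^2*(K+Q) ≤ (q^2+q^4)*(K+Q) :=
        mul_le_mul_of_nonneg_right (by linarith) (by linarith)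
      linarith only [e1, e2, e3, e4, h2, hfin, hts1, hs1n', hq1, hexp, hKQ, hε, hQ]
  · -- T1 < T2 : genuine crossing on both sides
    obtain ⟨x2, hx2S, hx2lt⟩ := exists_lt_of_csInf_lt ⟨M, hMS2⟩ (show T2 < T2 + ε by linarith)
    have hx2ge : T2 ≤ x2 := csInf_le bdd2 hx2S
    have hx2Icc : x2 ∈ Set.Icc (0:ℝ) M := ⟨le_trans ht.1 hx2S.1.1, hx2S.1.2⟩
    obtain ⟨z2, hz2mem, hz2d⟩ := (Metric.infDist_lt_iff hne_mM').1
      (lt_of_le_of_lt hx2S.2 (show K + ε < K + 2*ε by linarith))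
    obtain ⟨s2, hs2mem, rfl⟩ := hz2mem
    have hs2Icc : s2 ∈ Set.Icc (0:ℝ) M' := ⟨le_trans hm hs2mem.1, hs2mem.2⟩
    -- the intermediate points y1, y2
    set y1 := min (T1 + ε/2) ((T1+T2)/2) with hy1def
    have hy1a : T1 < y1 := lt_min (by linarith) (by linarith)
    have hy1b : y1 < T2 := lt_of_le_of_lt (min_le_right _ _) (by linarith)
    have hy1Icc : y1 ∈ Set.Icc (0:ℝ) M := ⟨by linarith, by linarith⟩
    obtain ⟨r1, hr1mem, hr1d⟩ := hbetween y1 hy1a hy1b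
    have hr1Icc : r1 ∈ Set.Icc (0:ℝ) M' := ⟨hr1mem.1, le_trans hr1mem.2 hmM'⟩
    have hx1y1 : |x1 - y1| ≤ 2*ε := by
      have h2 : y1 ≤ T1 + ε/2 := min_le_left _ _
      rw [abs_sub_comm, abs_of_nonneg (by linarith)]
      linarith
    set y2 := max (T2 - ε/2) ((T1+T2)/2) with hy2def
    have hy2a : T1 < y2 := lt_of_lt_of_le (by linarith : T1 < (T1+T2)/2) (le_max_right _ _)
    have hy2b : y2 < T2 := max_lt (by linarith) (by linarith)
    have hy2Icc : y2 ∈ Set.Icc (0:ℝ) M := ⟨by linarith, by linarith⟩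
    obtain ⟨r2, hr2mem, hr2d⟩ := hbetween y2 hy2a hy2b
    have hr2Icc : r2 ∈ Set.Icc (0:ℝ) M' := ⟨hr2mem.1, le_trans hr2mem.2 hmM'⟩
    have hx2y2 : |x2 - y2| ≤ 2*ε := by
      have h2 : T2 - ε/2 ≤ y2 := le_max_left _ _
      rw [abs_of_nonneg (by linarith)]
      linarith
    -- s1, s2 ≤ m + J
    have key : ∀ x y s r : ℝ, x ∈ Set.Icc (0:ℝ) M → y ∈ Set.Icc (0:ℝ) M →
        s ∈ Set.Icc (0:ℝ) M' → r ∈ Set.Icc (0:ℝ) M' → m ≤ s → r ≤ m → |x - y| ≤ 2*ε →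
        dist (α x) (β s) < K + 2*ε → dist (α y) (β r) < K + ε →
        s ≤ m + (q*(2*K+2*Q) + 5*q^2*ε) := by
      intro x y s r hx hy hs hr hms hrm hxy hds hdr
      have hαxy : dist (α x) (α y) ≤ 2*q*ε + Q := by
        have h2 := (hα x hx y hy).2
        have h3 : q*|x-y| ≤ q*(2*ε) := mul_le_mul_of_nonneg_left hxy hq0.le
        linarith
      have hdsr : dist (β s) (β r) ≤ 2*K + Q + 2*q*ε + 3*ε := by
        calc dist (β s) (β r) ≤ dist (β s) (α x) + dist (α x) (α y) + dist (α y) (β r) :=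
          dist_triangle4 _ _ _ _
        _ ≤ 2*K + Q + 2*q*ε + 3*ε := by rw [dist_comm (β s) (α x)]; linarith
      have h2 := (hβ s hs r hr).1
      have h3 : |s - r| = s - r := abs_of_nonneg (by linarith)
      have h4 := par_le hq (h3 ▸ h2)
      have h5 : s - r ≤ q*(2*K + 2*Q + 2*q*ε + 3*ε) := by
        calc s - r ≤ q*(dist (β s) (β r) + Q) := h4
        _ ≤ q*(2*K + 2*Q + 2*q*ε + 3*ε) := mul_le_mul_of_nonneg_left (by linarith) hq0.le
      have hq2' : q*ε ≤ q^2*ε :=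
        mul_le_mul_of_nonneg_right hq12 hε.le
      have h7 : q*(2*K + 2*Q + 2*q*ε + 3*ε) = q*(2*K+2*Q) + 2*(q^2*ε) + 3*(q*ε) := by ring
      have h6 : q*(2*K + 2*Q + 2*q*ε + 3*ε) ≤ q*(2*K+2*Q) + 5*q^2*ε := by linarith [hq2', h7]
      linarith
    have hs1J := key x1 y1 s1 r1 hx1Icc hy1Icc hs1Icc hr1Icc hs1mem.1 hr1mem.2 hx1y1 hz1d hr1d
    have hs2J := key x2 y2 s2 r2 hx2Icc hy2Icc hs2Icc hr2Icc hs2mem.1 hr2mem.2 hx2y2 hz2d hr2d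
    -- bound x2 - x1
    have hx1x2 : x2 - x1 ≤ 2*q*K+2*q*Q + q^2*(q*(2*K+2*Q) + 5*q^2*ε) + 10*q^2*ε := by
      have hs12 : |s1 - s2| ≤ q*(2*K+2*Q) + 5*q^2*ε := by
        rw [abs_le]
        have hJ0 : 0 ≤ q*(2*K+2*Q) + 5*q^2*ε := by positivity
        exact ⟨by linarith [hs1mem.1, hs2J], by linarith [hs2mem.1, hs1J]⟩
      have hβ12 : dist (β s1) (β s2) ≤ q*(q*(2*K+2*Q) + 5*q^2*ε) + Q := by
        have h2 := (hβ s1 hs1Icc s2 hs2Icc).2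
        have h3 : q*|s1-s2| ≤ q*(q*(2*K+2*Q) + 5*q^2*ε) := mul_le_mul_of_nonneg_left hs12 hq0.le
        linarith
      have hα12 : dist (α x1) (α x2) ≤ (K+2*ε) + (q*(q*(2*K+2*Q) + 5*q^2*ε) + Q) + (K+2*ε) := by
        calc dist (α x1) (α x2) ≤ dist (α x1) (β s1) + dist (β s1) (β s2) + dist (β s2) (α x2) :=
          dist_triangle4 _ _ _ _
        _ ≤ _ := by rw [dist_comm (β s2) (α x2)]; linarith
      have h2 := (hα x1 hx1Icc x2 hx2Icc).1
      have h3 : |x1 - x2| = x2 - x1 := by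
        rw [abs_sub_comm]; exact abs_of_nonneg (by linarith)
      have h4 := par_le hq (h3 ▸ h2)
      have h5 : x2 - x1 ≤ q*((K+2*ε) + (q*(q*(2*K+2*Q) + 5*q^2*ε) + Q) + (K+2*ε) + Q) := by
        calc x2 - x1 ≤ q*(dist (α x1) (α x2) + Q) := h4
        _ ≤ _ := mul_le_mul_of_nonneg_left (by linarith) hq0.le
      have h6 : q*((K+2*ε) + (q*(q*(2*K+2*Q) + 5*q^2*ε) + Q) + (K+2*ε) + Q) ≤
          2*q*K+2*q*Q + q^2*(q*(2*K+2*Q) + 5*q^2*ε) + 10*q^2*ε := by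
        have hq2' : q*ε ≤ q^2*ε :=
          mul_le_mul_of_nonneg_right hq12 hε.le
        have hq2e : (0:ℝ) ≤ q^2*ε := by positivity
        linarith
      linarith
    rcases le_or_gt (t - x1) ((2*q*K+2*q*Q + q^2*(q*(2*K+2*Q) + 5*q^2*ε) + 10*q^2*ε)/2)
      with hhalf | hhalf
    · exact endgame q Q K M M' m n t x1 s1 ε hq hQ hK hε α β hα hβ hm hmn hn h0 h1 ht hx1Icc
        hs1mem.1 hs1mem.2 hs1J hz1d
        (by rw [abs_of_nonneg (by linarith : (0:ℝ) ≤ t - x1)]; exact hhalf)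
    · have h5 : x2 - t ≤ (2*q*K+2*q*Q + q^2*(q*(2*K+2*Q) + 5*q^2*ε) + 10*q^2*ε)/2 := by
        linarith
      exact endgame q Q K M M' m n t x2 s2 ε hq hQ hK hε α β hα hβ hm hmn hn h0 h1 ht hx2Icc
        hs2mem.1 hs2mem.2 hs2J hz2d
        (by rw [abs_sub_comm, abs_of_nonneg (by linarith : (0:ℝ) ≤ x2 - t)]; exact h5)
private lemma dir1 {X : Type*} [MetricSpace X] (q Q K M M' : ℝ)
    (hq : 1 ≤ q) (hQ : 0 ≤ Q) (hK : 0 < K)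
    (α β : ℝ → X)
    (hα : ∀ s ∈ Set.Icc (0:ℝ) M, ∀ t ∈ Set.Icc (0:ℝ) M,
      (1 / q) * |s - t| - Q ≤ dist (α s) (α t) ∧ dist (α s) (α t) ≤ q * |s - t| + Q)
    (hβ : ∀ s ∈ Set.Icc (0:ℝ) M', ∀ t ∈ Set.Icc (0:ℝ) M',
      (1 / q) * |s - t| - Q ≤ dist (β s) (β t) ∧ dist (β s) (β t) ≤ q * |s - t| + Q)
    (hnbd : ∀ t ∈ Set.Icc (0:ℝ) M, Metric.infDist (α t) (β '' Set.Icc (0:ℝ) M') ≤ K)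
    (m n : ℝ) (hm : 0 ≤ m) (hmn : m < n) (hn : n ≤ M') (hM : 0 ≤ M)
    (h0 : dist (α 0) (β m) < K) (h1 : dist (α M) (β n) < K)
    (u : ℝ) (hu : u ∈ Set.Icc m n) (ε : ℝ) (hε : 0 < ε) :
    Metric.infDist (β u) (α '' Set.Icc 0 M) ≤ K + Q + 2*q^2*(K+Q) + 10*q^5*ε := by
  have hq0 : (0:ℝ) < q := by linarith
  have hmM' : m ≤ M' := le_of_lt (lt_of_lt_of_le hmn hn)
  have hM'0 : (0:ℝ) ≤ M' := le_trans hm hmM'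
  have hu0 : 0 ≤ u := le_trans hm hu.1
  have huM' : u ≤ M' := le_trans hu.2 hn
  have hne_0u : (β '' Set.Icc (0:ℝ) u).Nonempty := ⟨β m, m, ⟨hm, hu.1⟩, rfl⟩
  have hne_0M' : (β '' Set.Icc (0:ℝ) M').Nonempty := ⟨β m, m, ⟨hm, hmM'⟩, rfl⟩
  have hq35 : q^3 ≤ q^5 := qpow hq (by norm_num)
  have hq25 : q^2 ≤ q^5 := qpow hq (by norm_num)
  have h15 : 1 ≤ q^5 := one_le_pow₀ hq
  have e1 : q^3*ε ≤ q^5*ε := mul_le_mul_of_nonneg_right hq35 hε.le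
  have e3 : q^2*ε ≤ q^5*ε := mul_le_mul_of_nonneg_right hq25 hε.le
  have e2 : ε ≤ q^5*ε := by
    calc ε = 1*ε := (one_mul ε).symm
    _ ≤ q^5*ε := mul_le_mul_of_nonneg_right h15 hε.le
  set S : Set ℝ := {x : ℝ | (0 ≤ x ∧ x ≤ M) ∧ Metric.infDist (α x) (β '' Set.Icc (0:ℝ) u) ≤ K + ε}
    with hSdef
  have h0S : (0:ℝ) ∈ S := by
    refine ⟨⟨le_refl 0, hM⟩, ?_⟩
    have h2 : Metric.infDist (α 0) (β '' Set.Icc (0:ℝ) u) ≤ dist (α 0) (β m) :=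
      Metric.infDist_le_dist_of_mem ⟨m, ⟨hm, hu.1⟩, rfl⟩
    linarith
  have bdd : BddAbove S := ⟨M, fun x hx => hx.1.2⟩
  set T := sSup S with hTdef
  have hTge : 0 ≤ T := le_csSup bdd h0S
  have hTle : T ≤ M := csSup_le ⟨0, h0S⟩ (fun x hx => hx.1.2)
  obtain ⟨x1, hx1S, hx1gt⟩ := exists_lt_of_lt_csSup ⟨0, h0S⟩ (show T - ε < T by linarith)
  have hx1le : x1 ≤ T := le_csSup bdd hx1S
  have hx1Icc : x1 ∈ Set.Icc (0:ℝ) M := ⟨hx1S.1.1, hx1S.1.2⟩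
  obtain ⟨z1, hz1mem, hz1d⟩ := (Metric.infDist_lt_iff hne_0u).1
    (lt_of_le_of_lt hx1S.2 (show K + ε < K + 2*ε by linarith))
  obtain ⟨s1, hs1mem, rfl⟩ := hz1mem
  have hs1Icc : s1 ∈ Set.Icc (0:ℝ) M' := ⟨hs1mem.1, le_trans hs1mem.2 huM'⟩
  -- find the point beyond T
  have hup : ∃ y1, ∃ s', y1 ∈ Set.Icc (0:ℝ) M ∧ s' ∈ Set.Icc (0:ℝ) M' ∧ u ≤ s' ∧
      |x1 - y1| ≤ 2*ε ∧ dist (α y1) (β s') < K + ε := by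
    rcases lt_or_eq_of_le hTle with hTM | hTM
    · set y1 := min (T + ε) ((T+M)/2) with hy1def
      have hy1a : T < y1 := lt_min (by linarith) (by linarith)
      have hy1b : y1 < M := lt_of_le_of_lt (min_le_right _ _) (by linarith)
      have hy1Icc : y1 ∈ Set.Icc (0:ℝ) M := ⟨by linarith, hy1b.le⟩
      have hy1nS : y1 ∉ S := fun hc => absurd (le_csSup bdd hc) (by push_neg; exact hy1a)
      have hy1bad : ¬ Metric.infDist (α y1) (β '' Set.Icc (0:ℝ) u) ≤ K + ε := by
        intro hc; exact hy1nS ⟨⟨hy1Icc.1, hy1Icc.2⟩, hc⟩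
      push_neg at hy1bad
      have h5 : Metric.infDist (α y1) (β '' Set.Icc (0:ℝ) M') < K + ε :=
        lt_of_le_of_lt (hnbd y1 hy1Icc) (by linarith)
      obtain ⟨z2, hz2mem, hz2d⟩ := (Metric.infDist_lt_iff hne_0M').1 h5
      obtain ⟨s', hs'mem, rfl⟩ := hz2mem
      have hus' : u ≤ s' := by
        by_contra hc
        push_neg at hc
        have : Metric.infDist (α y1) (β '' Set.Icc (0:ℝ) u) ≤ dist (α y1) (β s') :=
          Metric.infDist_le_dist_of_mem ⟨s', ⟨hs'mem.1, hc.le⟩, rfl⟩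
        linarith
      refine ⟨y1, s', hy1Icc, hs'mem, hus', ?_, hz2d⟩
      have h6 : y1 ≤ T + ε := min_le_left _ _
      rw [abs_sub_comm, abs_of_nonneg (by linarith)]
      linarith
    · refine ⟨M, n, ⟨hM, le_refl M⟩, ⟨by linarith, hn⟩, hu.2, ?_, by linarith⟩
      rw [abs_sub_comm, abs_of_nonneg (by linarith [hTM ▸ hx1le])]
      linarith [hTM ▸ hx1gt, hTM ▸ hx1le]
  obtain ⟨y1, s', hy1Icc, hs'Icc, hus', hx1y1, hs'd⟩ := hup
  -- now the estimate
  have hαxy : dist (α x1) (α y1) ≤ 2*q*ε + Q := by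
    have h2 := (hα x1 hx1Icc y1 hy1Icc).2
    have h3 : q*|x1-y1| ≤ q*(2*ε) := mul_le_mul_of_nonneg_left hx1y1 hq0.le
    linarith
  have hss : dist (β s1) (β s') ≤ 2*K + Q + 2*q*ε + 3*ε := by
    calc dist (β s1) (β s') ≤ dist (β s1) (α x1) + dist (α x1) (α y1) + dist (α y1) (β s') :=
      dist_triangle4 _ _ _ _
    _ ≤ 2*K + Q + 2*q*ε + 3*ε := by rw [dist_comm (β s1) (α x1)]; linarith
  have hpar : s' - s1 ≤ q*(2*K + 2*Q + 2*q*ε + 3*ε) := by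
    have h2 := (hβ s1 hs1Icc s' hs'Icc).1
    have h3 : |s1 - s'| = s' - s1 := by
      rw [abs_sub_comm]; exact abs_of_nonneg (by linarith [hs1mem.2, hus'])
    have h4 := par_le hq (h3 ▸ h2)
    calc s' - s1 ≤ q*(dist (β s1) (β s') + Q) := h4
    _ ≤ q*(2*K + 2*Q + 2*q*ε + 3*ε) := mul_le_mul_of_nonneg_left (by linarith) hq0.le
  have hus1 : u - s1 ≤ q*(2*K + 2*Q + 2*q*ε + 3*ε) := by linarith [hus', hpar, hs1mem.2]
  have hβu1 : dist (β u) (β s1) ≤ q*(u - s1) + Q := by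
    have h2 := (hβ u ⟨hu0, huM'⟩ s1 hs1Icc).2
    rwa [show |u - s1| = u - s1 from abs_of_nonneg (by linarith [hs1mem.2])] at h2
  have hq1 : q*(u-s1) ≤ q*(q*(2*K + 2*Q + 2*q*ε + 3*ε)) :=
    mul_le_mul_of_nonneg_left hus1 hq0.le
  have hfin : dist (β u) (α x1) ≤ dist (β u) (β s1) + dist (β s1) (α x1) := dist_triangle _ _ _
  have h2 := Metric.infDist_le_dist_of_mem (x := β u)
    (Set.mem_image_of_mem α (Set.mem_Icc.mpr ⟨hx1Icc.1, hx1Icc.2⟩))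
  have hexp : q*(q*(2*K + 2*Q + 2*q*ε + 3*ε)) =
      2*q^2*K + 2*q^2*Q + 2*(q^3*ε) + 3*(q^2*ε) := by ring
  rw [dist_comm (β s1) (α x1)] at hfin
  linarith only [h2, hfin, hβu1, hq1, hexp, hz1d, e1, e2, e3, hε, hQ]
theorem stmt_4 {X : Type*} [MetricSpace X] (q Q K M M' : ℝ)
    (hq : 1 ≤ q) (hQ : 0 ≤ Q) (hK : 0 < K) (hM : 0 ≤ M)
    (α β : ℝ → X)
    (hα : ∀ s ∈ Set.Icc (0:ℝ) M, ∀ t ∈ Set.Icc (0:ℝ) M,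
      (1 / q) * |s - t| - Q ≤ dist (α s) (α t) ∧ dist (α s) (α t) ≤ q * |s - t| + Q)
    (hβ : ∀ s ∈ Set.Icc (0:ℝ) M', ∀ t ∈ Set.Icc (0:ℝ) M',
      (1 / q) * |s - t| - Q ≤ dist (β s) (β t) ∧ dist (β s) (β t) ≤ q * |s - t| + Q)
    (hnbd : ∀ t ∈ Set.Icc (0:ℝ) M, Metric.infDist (α t) (β '' Set.Icc (0:ℝ) M') ≤ K)
    (m n : ℝ) (hm : 0 ≤ m) (hmn : m < n) (hn : n ≤ M')
    (h0 : dist (α 0) (β m) < K) (h1 : dist (α M) (β n) < K) :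
    Metric.hausdorffDist (α '' Set.Icc 0 M) (β '' Set.Icc m n)
      ≤ K + Q + 6 * q ^ 6 * Q + 2 * K * q ^ 5 := by
  have hq0 : (0:ℝ) < q := by linarith
  have hmM' : m ≤ M' := (lt_of_lt_of_le hmn hn).le
  have hM'0 : (0:ℝ) ≤ M' := le_trans hm hmM'
  have hq25 : q^2 ≤ q^5 := qpow hq (by norm_num)
  have hq45 : q^4 ≤ q^5 := qpow hq (by norm_num)
  have hq26 : q^2 ≤ q^6 := qpow hq (by norm_num)
  have hq46 : q^4 ≤ q^6 := qpow hq (by norm_num)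
  have h16 : 1 ≤ q^6 := one_le_pow₀ hq
  have h15 : 1 ≤ q^5 := one_le_pow₀ hq
  have hne_mM' : (β '' Set.Icc m M').Nonempty := ⟨β m, m, ⟨le_refl m, hmM'⟩, rfl⟩
  have hne_0n : (β '' Set.Icc (0:ℝ) n).Nonempty := ⟨β m, m, ⟨hm, hmn.le⟩, rfl⟩
  -- key comparison: the core bound is below the target
  have hcmp : ∀ ε' : ℝ, 0 < ε' →
      K + 2*Q + (q^2+q^4)*(K+Q) + 10*q^5*(ε'/(10*q^5)) ≤
      K + Q + 6 * q ^ 6 * Q + 2 * K * q ^ 5 + ε' := by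
    intro ε' hε'
    have heq : 10*q^5*(ε'/(10*q^5)) = ε' := by
      field_simp
    have c1 : (q^2+q^4)*K ≤ 2*q^5*K :=
      mul_le_mul_of_nonneg_right (by linarith) hK.le
    have c2 : (1+q^2+q^4)*Q ≤ 6*q^6*Q :=
      mul_le_mul_of_nonneg_right (by linarith) hQ
    nlinarith [c1, c2, heq]
  apply Metric.hausdorffDist_le_of_infDist (by positivity)
  · rintro x ⟨t, htIcc, rfl⟩
    apply le_of_forall_pos_le_add
    intro ε' hε'
    set ε := ε' / (10*q^5) with hεdef
    have hε : 0 < ε := by positivity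
    have hεeq : 10*q^5*ε = ε' := by rw [hεdef]; field_simp
    by_cases hG : Metric.infDist (α t) (β '' Set.Icc m M') ≤ K + ε
    · by_cases hG' : Metric.infDist (α t) (β '' Set.Icc (0:ℝ) n) ≤ K + ε
      · -- both sides good : direct estimate
        obtain ⟨z1, hz1mem, hz1d⟩ := (Metric.infDist_lt_iff hne_mM').1
          (lt_of_le_of_lt hG (show K + ε < K + 2*ε by linarith))
        obtain ⟨s, hsmem, rfl⟩ := hz1mem
        obtain ⟨z2, hz2mem, hz2d⟩ := (Metric.infDist_lt_iff hne_0n).1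
          (lt_of_le_of_lt hG' (show K + ε < K + 2*ε by linarith))
        obtain ⟨s', hs'mem, rfl⟩ := hz2mem
        have hbig : (0:ℝ) ≤ Q + 6*q^6*Q + 2*K*q^5 := by positivity
        have he2 : 2*ε ≤ 10*q^5*ε := by nlinarith
        rcases le_or_gt s n with hsn | hsn
        · have h2 := Metric.infDist_le_dist_of_mem (x := α t)
            (Set.mem_image_of_mem β (Set.mem_Icc.mpr ⟨hsmem.1, hsn⟩))
          linarith
        · rcases le_or_gt m s' with hms' | hms'
          · have h2 := Metric.infDist_le_dist_of_mem (x := α t)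
              (Set.mem_image_of_mem β (Set.mem_Icc.mpr ⟨hms', hs'mem.2⟩))
            linarith
          · -- s > n, s' < m : pass through β n
            have hsIcc : s ∈ Set.Icc (0:ℝ) M' := ⟨le_trans hm hsmem.1, hsmem.2⟩
            have hs'Icc : s' ∈ Set.Icc (0:ℝ) M' := ⟨hs'mem.1, le_trans hs'mem.2 hn⟩
            have hd : dist (β s) (β s') ≤ 2*K + 4*ε := by
              calc dist (β s) (β s') ≤ dist (β s) (α t) + dist (α t) (β s') :=
                dist_triangle _ _ _
              _ ≤ 2*K + 4*ε := by rw [dist_comm (β s) (α t)]; linarith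
            have hpar : s - s' ≤ q*(2*K + 4*ε + Q) := by
              have h2 := (hβ s hsIcc s' hs'Icc).1
              have h3 : |s - s'| = s - s' := abs_of_nonneg (by linarith [hs'mem.2, hsmem.1])
              have h4 := par_le hq (h3 ▸ h2)
              calc s - s' ≤ q*(dist (β s) (β s') + Q) := h4
              _ ≤ q*(2*K + 4*ε + Q) := mul_le_mul_of_nonneg_left (by linarith) hq0.le
            have hβsn : dist (β s) (β n) ≤ q*(s-n) + Q := by
              have h2 := (hβ s hsIcc n ⟨by linarith, hn⟩).2
              rwa [show |s - n| = s - n from abs_of_nonneg (by linarith)] at h2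
            have hq1 : q*(s-n) ≤ q*(q*(2*K + 4*ε + Q)) :=
              mul_le_mul_of_nonneg_left (by linarith [hpar, hs'mem.2]) hq0.le
            have hfin : dist (α t) (β n) ≤ dist (α t) (β s) + dist (β s) (β n) :=
              dist_triangle _ _ _
            have h2 := Metric.infDist_le_dist_of_mem (x := α t)
              (Set.mem_image_of_mem β (Set.mem_Icc.mpr ⟨hmn.le, le_refl n⟩))
            have hexp : q*(q*(2*K + 4*ε + Q)) = 2*q^2*K + 4*(q^2*ε) + q^2*Q := by ring
            have c1 : 2*(q^2*K) ≤ 2*(q^5*K) := by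
              have := mul_le_mul_of_nonneg_right hq25 hK.le; linarith
            have c2 : q^2*Q ≤ 6*(q^6*Q) := by
              have := mul_le_mul_of_nonneg_right hq26 hQ
              have h6 : (0:ℝ) ≤ q^6*Q := by positivity
              linarith
            have c3 : 4*(q^2*ε) + 2*ε ≤ 10*(q^5*ε) := by
              have a1 := mul_le_mul_of_nonneg_right hq25 hε.le
              have a2 : ε ≤ q^5*ε := by
                calc ε = 1*ε := (one_mul ε).symm
                _ ≤ q^5*ε := mul_le_mul_of_nonneg_right h15 hε.le
              have a3 : (0:ℝ) ≤ q^5*ε := by positivity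
              linarith
            have hgoal : 10*(q^5*ε) = ε' := by rw [← hεeq]; ring
            nlinarith [h2, hfin, hβsn, hq1, hexp, hz1d, c1, c2, c3]
      · -- the "GoodR fails" case : apply core to the reversed paths
        push_neg at hG'
        have himg : ∀ a b : ℝ, (fun s => β (M' - s)) '' Set.Icc a b
            = β '' Set.Icc (M'-b) (M'-a) := by
          intro a b
          rw [show (fun s => β (M' - s)) = β ∘ (fun s => M' - s) from rfl, Set.image_comp,
            Set.image_const_sub_Icc]
        have hα' : ∀ s ∈ Set.Icc (0:ℝ) M, ∀ t ∈ Set.Icc (0:ℝ) M,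
            (1/q)*|s-t| - Q ≤ dist (α (M - s)) (α (M - t)) ∧
            dist (α (M - s)) (α (M - t)) ≤ q*|s-t| + Q := by
          intro s hs t' ht'
          have h := hα (M - s) ⟨by linarith [hs.2], by linarith [hs.1]⟩
            (M - t') ⟨by linarith [ht'.2], by linarith [ht'.1]⟩
          rwa [show M - s - (M - t') = -(s - t') by ring, abs_neg] at h
        have hβ' : ∀ s ∈ Set.Icc (0:ℝ) M', ∀ t ∈ Set.Icc (0:ℝ) M',
            (1/q)*|s-t| - Q ≤ dist (β (M' - s)) (β (M' - t)) ∧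
            dist (β (M' - s)) (β (M' - t)) ≤ q*|s-t| + Q := by
          intro s hs t' ht'
          have h := hβ (M' - s) ⟨by linarith [hs.2], by linarith [hs.1]⟩
            (M' - t') ⟨by linarith [ht'.2], by linarith [ht'.1]⟩
          rwa [show M' - s - (M' - t') = -(s - t') by ring, abs_neg] at h
        have hnbd' : ∀ x ∈ Set.Icc (0:ℝ) M,
            Metric.infDist (α (M - x)) ((fun s => β (M' - s)) '' Set.Icc (0:ℝ) M') ≤ K := by
          intro x hx
          rw [himg, sub_self, sub_zero]
          exact hnbd (M - x) ⟨by linarith [hx.2], by linarith [hx.1]⟩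
        have h0' : dist (α (M - 0)) (β (M' - (M' - n))) < K := by
          rw [sub_zero, sub_sub_cancel]; exact h1
        have h1' : dist (α (M - M)) (β (M' - (M' - m))) < K := by
          rw [sub_self, sub_sub_cancel]; exact h0
        have hbad' : K + ε <
            Metric.infDist (α (M - (M - t))) ((fun s => β (M' - s)) '' Set.Icc (M' - n) M') := by
          rw [himg, sub_self, sub_sub_cancel, sub_sub_cancel]
          exact hG'
        have hcore := core q Q K M M' hq hQ hK (fun x => α (M - x)) (fun s => β (M' - s))
          hα' hβ' hnbd' (M' - n) (M' - m) (by linarith) (by linarith) (by linarith)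
          h0' h1' (M - t) ⟨by linarith [htIcc.2], by linarith [htIcc.1]⟩ ε hε hbad'
        rw [himg, sub_sub_cancel, sub_sub_cancel] at hcore
        have hcore2 : Metric.infDist (α t) (β '' Set.Icc m n)
            ≤ K + 2*Q + (q^2+q^4)*(K+Q) + 10*q^5*ε := by
          have h3 : M - (M - t) = t := by ring
          simpa [h3] using hcore
        calc Metric.infDist (α t) (β '' Set.Icc m n)
            ≤ K + 2*Q + (q^2+q^4)*(K+Q) + 10*q^5*ε := hcore2
        _ ≤ K + Q + 6 * q ^ 6 * Q + 2 * K * q ^ 5 + ε' := hcmp ε' hε'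
    · push_neg at hG
      have hcore := core q Q K M M' hq hQ hK α β hα hβ hnbd m n hm hmn hn h0 h1 t htIcc ε hε hG
      calc Metric.infDist (α t) (β '' Set.Icc m n)
          ≤ K + 2*Q + (q^2+q^4)*(K+Q) + 10*q^5*ε := hcore
      _ ≤ K + Q + 6 * q ^ 6 * Q + 2 * K * q ^ 5 + ε' := hcmp ε' hε'
  · rintro y ⟨u, huIcc, rfl⟩
    apply le_of_forall_pos_le_add
    intro ε' hε'
    set ε := ε' / (10*q^5) with hεdef
    have hε : 0 < ε := by positivity
    have hεeq : 10*q^5*ε = ε' := by rw [hεdef]; field_simp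
    have h := dir1 q Q K M M' hq hQ hK α β hα hβ hnbd m n hm hmn hn hM h0 h1 u huIcc ε hε
    have c1 : 2*q^2*(K+Q) ≤ 2*q^5*K + 6*q^6*Q := by
      have a1 : q^2*K ≤ q^5*K := mul_le_mul_of_nonneg_right hq25 hK.le
      have a2 : q^2*Q ≤ q^6*Q := mul_le_mul_of_nonneg_right hq26 hQ
      have a3 : (0:ℝ) ≤ q^6*Q := by positivity
      nlinarith
    nlinarith [h, c1, hεeq]
end

section
/- Let (P_k)_{k≥0} be an integer-valued stochastic process with P_0 = 0 such that, conditionally on the past, P(P_{k+1} < P_k − j | history) ≤ (1/10)^{j+1} for all j ≥ −1 (in particular P(P_{k+1} ≤ P_k | history) ≤ 1/10 and P_{k+1} ≤ P_k + 1 always). Then P(P_k ≤ k/2) ≤ (1/10)^{⌊k/10⌋} for all k (more precisely, P(P_k ≤ k/2) decays exponentially in k: there exist C > 0 and c ∈ (0,1) with P(P_k ≤ k/2) ≤ C·c^k). -/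
/-!
Write `k - P k` for the deficit of the process at time `k`; it starts at `0`, a.s. never
decreases, and conditionally on `F k` it jumps by at least `t` with probability at most
`q ^ t`. A deficit of at least `n` at time `k + 1` forces a deficit of at least `n - t` at time
`k` followed by a jump of at least `t`, for some `t ≤ n`, so `f k n = μ(k - P k ≥ n)` satisfies
`f (k + 1) n ≤ ∑_{t ≤ n} q ^ t f k (n - t)`. This convolution recursion gives
`f k n ≤ 2 ^ (n + k) q ^ n`, and for `q = 1/10`, `n = ⌈k/2⌉` this is at most `(2/√5) ^ k`.
-/

open MeasureTheory Finset

lemma le_two_pow_mul_pow_of_le_sum_pow_mul {q : ℝ} (hq : 0 ≤ q) {f : ℕ → ℕ → ℝ}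
    (h0 : ∀ n, f 0 n ≤ q ^ n)
    (hsucc : ∀ k n, f (k + 1) n ≤ ∑ t ∈ range (n + 1), q ^ t * f k (n - t)) (k n : ℕ) :
    f k n ≤ 2 ^ (n + k) * q ^ n := by
  induction k generalizing n with
  | zero =>
    simpa using (h0 n).trans (le_mul_of_one_le_left (by positivity) (one_le_pow₀ one_le_two))
  | succ k ih =>
    have hterm : ∀ t ∈ range (n + 1),
        q ^ t * f k (n - t) ≤ 2 ^ (n + k) * q ^ n * (1 / 2) ^ t := by
      intro t ht
      have htn : t ≤ n := Nat.lt_succ_iff.mp (mem_range.mp ht)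
      have h2 : (2 : ℝ) ^ (n - t + k) * 2 ^ t = 2 ^ (n + k) := by
        rw [← pow_add]; congr 1; omega
      calc q ^ t * f k (n - t) ≤ q ^ t * (2 ^ (n - t + k) * q ^ (n - t)) :=
            mul_le_mul_of_nonneg_left (ih _) (by positivity)
        _ = 2 ^ (n + k) * q ^ n * (1 / 2) ^ t := by
            have h1 : (2 : ℝ) ^ t * (1 / 2) ^ t = 1 := by rw [← mul_pow]; norm_num
            rw [← pow_mul_pow_sub q htn, ← h2]
            linear_combination (-(2 : ℝ) ^ (n - t + k) * (q ^ t * q ^ (n - t))) * h1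
    calc f (k + 1) n ≤ ∑ t ∈ range (n + 1), 2 ^ (n + k) * q ^ n * (1 / 2) ^ t :=
          (hsucc k n).trans (sum_le_sum hterm)
      _ = 2 ^ (n + k) * q ^ n * ∑ t ∈ range (n + 1), (1 / 2 : ℝ) ^ t := by rw [mul_sum]
      _ ≤ 2 ^ (n + k) * q ^ n * 2 :=
          mul_le_mul_of_nonneg_left (sum_geometric_two_le _) (by positivity)
      _ = 2 ^ (n + (k + 1)) * q ^ n := by ring

lemma exists_mem_range_sub_le_and_le {a b : ℤ} (ha : 0 ≤ a) (hb : 0 ≤ b) {n : ℕ}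
    (h : (n : ℤ) ≤ a + b) : ∃ t ∈ range (n + 1), ((n - t : ℕ) : ℤ) ≤ a ∧ (t : ℤ) ≤ b := by
  refine ⟨min b.toNat n, mem_range.mpr (Nat.lt_succ_of_le (min_le_right _ _)), ?_, ?_⟩ <;> omega

namespace MeasureTheory

lemma measureReal_inter_le_of_condExp_indicator_le {Ω : Type*} {m m0 : MeasurableSpace Ω}
    {μ : Measure Ω} [IsFiniteMeasure μ] (hm : m ≤ m0) {A B : Set Ω} (hA : MeasurableSet[m] A)
    (hB : MeasurableSet B) {r : ℝ}
    (h : ∀ᵐ ω ∂μ, μ[B.indicator (fun _ => (1 : ℝ)) | m] ω ≤ r) :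
    μ.real (A ∩ B) ≤ r * μ.real A := by
  have hint : Integrable (B.indicator fun _ => (1 : ℝ)) μ := (integrable_const 1).indicator hB
  calc μ.real (A ∩ B) = ∫ ω in A, B.indicator (fun _ => (1 : ℝ)) ω ∂μ := by
        rw [setIntegral_indicator hB, setIntegral_const, smul_eq_mul, mul_one]
    _ = ∫ ω in A, μ[B.indicator (fun _ => (1 : ℝ)) | m] ω ∂μ :=
        (setIntegral_condExp hm hint hA).symm
    _ ≤ ∫ _ in A, r ∂μ :=
        integral_mono_ae integrable_condExp.integrableOn integrableOn_const (ae_restrict_of_ae h)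
    _ = r * μ.real A := by rw [setIntegral_const, smul_eq_mul, mul_comm]

section Deficit

variable {Ω : Type*} {m0 : MeasurableSpace Ω} {μ : Measure Ω} {F : Filtration ℕ m0}
  {P : ℕ → Ω → ℤ} {q : ℝ}

lemma ae_le_of_step_le_add_one (h0 : ∀ ω, P 0 ω = 0)
    (hstep : ∀ᵐ ω ∂μ, ∀ k, P (k + 1) ω ≤ P k ω + 1) : ∀ᵐ ω ∂μ, ∀ k, P k ω ≤ k := by
  filter_upwards [hstep] with ω hω k
  induction k with
  | zero => simp [h0 ω]
  | succ k ih => push_cast; linarith [hω k]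

lemma setOf_le_sub_succ_ae_le_biUnion (h0 : ∀ ω, P 0 ω = 0)
    (hstep : ∀ᵐ ω ∂μ, ∀ k, P (k + 1) ω ≤ P k ω + 1) (k n : ℕ) :
    {ω | P (k + 1) ω ≤ (k + 1 : ℕ) - n} ≤ᵐ[μ]
      (⋃ t ∈ range (n + 1),
        {ω | P k ω ≤ k - (n - t : ℕ)} ∩ {ω | P (k + 1) ω ≤ P k ω + 1 - t} : Set Ω) := by
  filter_upwards [hstep, ae_le_of_step_le_add_one h0 hstep] with ω hstep hle
    (hω : P (k + 1) ω ≤ (k + 1 : ℕ) - n)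
  obtain ⟨t, ht, hPk, hjump⟩ := exists_mem_range_sub_le_and_le (a := k - P k ω)
    (b := P k ω + 1 - P (k + 1) ω) (n := n) (by linarith [hle k]) (by linarith [hstep k])
    (by push_cast at hω; linarith)
  exact Set.mem_biUnion ht ⟨by simp only [Set.mem_ofPred_eq]; linarith,
    by simp only [Set.mem_ofPred_eq]; linarith⟩

lemma measureReal_inter_jump_le [IsFiniteMeasure μ] (hadapted : Adapted F P)
    (hcond : ∀ k j : ℕ, ∀ᵐ ω ∂μ,
      μ[{ω' | P (k + 1) ω' ≤ P k ω' - j}.indicator (fun _ => (1 : ℝ)) | F k] ω ≤ q ^ (j + 1))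
    {k : ℕ} {A : Set Ω} (hA : MeasurableSet[F k] A) (t : ℕ) :
    μ.real (A ∩ {ω | P (k + 1) ω ≤ P k ω + 1 - t}) ≤ q ^ t * μ.real A := by
  cases t with
  | zero => simpa using measureReal_mono Set.inter_subset_left
  | succ j =>
    have hmeas : ∀ i, Measurable (P i) := fun i => (hadapted i).mono (F.le i) le_rfl
    have hset : {ω | P (k + 1) ω ≤ P k ω + 1 - (j + 1 : ℕ)} = {ω | P (k + 1) ω ≤ P k ω - j} := by
      ext ω; simp only [Set.mem_ofPred_eq]; omega
    rw [hset]
    exact measureReal_inter_le_of_condExp_indicator_le (F.le k) hA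
      (measurableSet_le (hmeas _) ((hmeas k).sub measurable_const)) (hcond k j)

lemma measureReal_le_sub_succ_le_sum [IsFiniteMeasure μ] (hadapted : Adapted F P)
    (h0 : ∀ ω, P 0 ω = 0)
    (hstep : ∀ᵐ ω ∂μ, ∀ k, P (k + 1) ω ≤ P k ω + 1)
    (hcond : ∀ k j : ℕ, ∀ᵐ ω ∂μ,
      μ[{ω' | P (k + 1) ω' ≤ P k ω' - j}.indicator (fun _ => (1 : ℝ)) | F k] ω ≤ q ^ (j + 1))
    (k n : ℕ) :
    μ.real {ω | P (k + 1) ω ≤ (k + 1 : ℕ) - n} ≤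
      ∑ t ∈ range (n + 1), q ^ t * μ.real {ω | P k ω ≤ k - (n - t : ℕ)} := by
  have hE : ∀ i, MeasurableSet[F k] {ω | P k ω ≤ k - i} :=
    fun i => hadapted k measurableSet_Iic
  calc μ.real {ω | P (k + 1) ω ≤ (k + 1 : ℕ) - n}
      ≤ μ.real (⋃ t ∈ range (n + 1),
          {ω | P k ω ≤ k - (n - t : ℕ)} ∩ {ω | P (k + 1) ω ≤ P k ω + 1 - t}) :=
        ENNReal.toReal_mono (measure_ne_top _ _)
          (measure_mono_ae (setOf_le_sub_succ_ae_le_biUnion h0 hstep k n))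
    _ ≤ ∑ t ∈ range (n + 1),
          μ.real ({ω | P k ω ≤ k - (n - t : ℕ)} ∩ {ω | P (k + 1) ω ≤ P k ω + 1 - t}) :=
        measureReal_biUnion_finset_le _ _
    _ ≤ _ := sum_le_sum fun t _ => measureReal_inter_jump_le hadapted hcond (hE _) t

theorem measureReal_le_sub_le_two_pow_mul_pow [IsProbabilityMeasure μ] (hq : 0 ≤ q)
    (hadapted : Adapted F P) (h0 : ∀ ω, P 0 ω = 0)
    (hstep : ∀ᵐ ω ∂μ, ∀ k, P (k + 1) ω ≤ P k ω + 1)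
    (hcond : ∀ k j : ℕ, ∀ᵐ ω ∂μ,
      μ[{ω' | P (k + 1) ω' ≤ P k ω' - j}.indicator (fun _ => (1 : ℝ)) | F k] ω ≤ q ^ (j + 1))
    (k n : ℕ) : μ.real {ω | P k ω ≤ k - n} ≤ 2 ^ (n + k) * q ^ n := by
  refine le_two_pow_mul_pow_of_le_sum_pow_mul hq (f := fun k n => μ.real {ω | P k ω ≤ k - n})
    (fun n => ?_) (measureReal_le_sub_succ_le_sum hadapted h0 hstep hcond) k n
  cases n with
  | zero => simp
  | succ n =>
    have hempty : {ω | P 0 ω ≤ ((0 : ℕ) : ℤ) - (n + 1 : ℕ)} = ∅ := by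
      ext ω; simp only [Set.mem_ofPred_eq, h0 ω, Set.mem_empty_iff_false, iff_false]; omega
    rw [hempty, measureReal_empty]
    positivity

end Deficit

end MeasureTheory

lemma two_pow_add_mul_inv_ten_pow_le {n k : ℕ} (hk : k ≤ 2 * n) :
    (2 : ℝ) ^ (n + k) * (1 / 10) ^ n ≤ (2 / √5) ^ k := by
  have hsq : √5 ^ 2 = 5 := Real.sq_sqrt (by norm_num)
  have hinv : 1 / √5 ≤ 1 := by
    rw [div_le_one (by positivity)]; nlinarith [Real.sqrt_nonneg 5]
  calc (2 : ℝ) ^ (n + k) * (1 / 10) ^ n = 2 ^ k * (1 / √5) ^ (2 * n) := by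
        rw [pow_mul, div_pow 1 √5 2, hsq, pow_add, mul_comm ((2 : ℝ) ^ n), mul_assoc, ← mul_pow]
        norm_num
    _ ≤ 2 ^ k * (1 / √5) ^ k :=
        mul_le_mul_of_nonneg_left (pow_le_pow_of_le_one (by positivity) hinv hk) (by positivity)
    _ = (2 / √5) ^ k := by rw [← mul_pow, mul_one_div]

theorem stmt_8 {Ω : Type*} {m0 : MeasurableSpace Ω} (μ : MeasureTheory.Measure Ω)
    [MeasureTheory.IsProbabilityMeasure μ]
    (F : MeasureTheory.Filtration ℕ m0)
    (P : ℕ → Ω → ℤ)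
    (hadapted : MeasureTheory.Adapted F P)
    (h0 : ∀ ω, P 0 ω = 0)
    (hstep : ∀ᵐ ω ∂μ, ∀ k, P (k + 1) ω ≤ P k ω + 1)
    (hcond : ∀ k : ℕ, ∀ j : ℕ, ∀ᵐ ω ∂μ,
      MeasureTheory.condExp (F k) μ
        (Set.indicator {ω' | P (k + 1) ω' ≤ P k ω' - j} (fun _ => (1:ℝ))) ω
        ≤ (1 / 10 : ℝ) ^ (j + 1)) :
    ∃ C > (0:ℝ), ∃ c ∈ Set.Ioo (0:ℝ) 1, ∀ k : ℕ,
      (μ {ω | (P k ω : ℝ) ≤ (k : ℝ) / 2}).toReal ≤ C * c ^ k := by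
  have hc : 2 / √5 < 1 := by
    rw [div_lt_one (by positivity), Real.lt_sqrt zero_le_two]; norm_num
  refine ⟨1, one_pos, 2 / √5, ⟨by positivity, hc⟩, fun k => ?_⟩
  have hsub : {ω | (P k ω : ℝ) ≤ (k : ℝ) / 2} ⊆ {ω | P k ω ≤ k - (k - k / 2 : ℕ)} := by
    intro ω hω
    have h2 : 2 * P k ω ≤ (k : ℤ) := by
      simp only [Set.mem_ofPred_eq] at hω; exact_mod_cast (by linarith : (2 * P k ω : ℝ) ≤ k)
    simp only [Set.mem_ofPred_eq]; omega
  calc μ.real {ω | (P k ω : ℝ) ≤ (k : ℝ) / 2} ≤ μ.real {ω | P k ω ≤ k - (k - k / 2 : ℕ)} :=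
        measureReal_mono hsub
    _ ≤ 2 ^ ((k - k / 2) + k) * (1 / 10) ^ (k - k / 2) :=
        measureReal_le_sub_le_two_pow_mul_pow (by norm_num) hadapted h0 hstep hcond _ _
    _ ≤ (2 / √5) ^ k := two_pow_add_mul_inv_ten_pow_le (by omega)
    _ = 1 * (2 / √5) ^ k := (one_mul _).symm
end

section
/- Let (a_n) be a sequence of real numbers and L ∈ ℝ, and suppose there exist constants C > 0 and β ∈ (0, 1/2) such that |a_{2m} − 2 a_m| ≤ C·m^β for all m ≥ 1 and (a_{n·2^k})/(n·2^k) → L as k → ∞ for each fixed n. Then |L·n − a_n| ≤ C'·n^β for a constant C' depending only on C and β; in particular L − a_n/n = o(n^{β−1}) = o(1/√n). -/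
open Filter Real

theorem stmt_9 (a : ℕ → ℝ) (L C β : ℝ) (hC : 0 < C) (hβ : β ∈ Set.Ioo (0:ℝ) (1/2))
    (hdouble : ∀ m : ℕ, 1 ≤ m → |a (2 * m) - 2 * a m| ≤ C * (m : ℝ) ^ β)
    (hlim : ∀ n : ℕ, 1 ≤ n →
      Filter.Tendsto (fun k : ℕ => a (n * 2 ^ k) / ((n : ℝ) * 2 ^ k))
        Filter.atTop (nhds L)) :
    ∃ C' > (0:ℝ), ∀ n : ℕ, 1 ≤ n → |L * n - a n| ≤ C' * (n : ℝ) ^ β := by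
  obtain ⟨hβ0, hβh⟩ := hβ
  set r : ℝ := (2:ℝ) ^ β / 2 with hrdef
  have h2β : (2:ℝ) ^ β < 2 := by
    calc (2:ℝ) ^ β < 2 ^ (1:ℝ) :=
          Real.rpow_lt_rpow_left_iff (by norm_num) |>.mpr (by linarith)
      _ = 2 := Real.rpow_one 2
  have h2β0 : (0:ℝ) < (2:ℝ) ^ β := Real.rpow_pos_of_pos (by norm_num) β
  have hr0 : 0 < r := by positivity
  have hr1 : r < 1 := by rw [hrdef]; linarith
  have h1r : 0 < 1 - r := by linarith
  refine ⟨C / (2 * (1 - r)), div_pos hC (by linarith), ?_⟩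
  intro n hn
  have hn0 : (0:ℝ) < n := by exact_mod_cast hn
  set b : ℕ → ℝ := fun k => a (n * 2 ^ k) / 2 ^ k with hb
  have hstep : ∀ k : ℕ, |b (k+1) - b k| ≤ (C * (n:ℝ) ^ β / 2) * r ^ k := by
    intro k
    have hm : 1 ≤ n * 2 ^ k := Nat.one_le_iff_ne_zero.mpr (by positivity)
    have hd := hdouble (n * 2 ^ k) hm
    have h2k : (0:ℝ) < 2 ^ k := by positivity
    have hidx : n * 2 ^ (k+1) = 2 * (n * 2 ^ k) := by ring
    have hbk : b (k+1) - b k = (a (2 * (n * 2 ^ k)) - 2 * a (n * 2 ^ k)) / 2 ^ (k+1) := by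
      simp only [hb, hidx]
      rw [pow_succ]
      field_simp
    have hcast : ((n * 2 ^ k : ℕ) : ℝ) ^ β = (n:ℝ) ^ β * ((2:ℝ) ^ β) ^ k := by
      push_cast
      rw [Real.mul_rpow (le_of_lt hn0) (le_of_lt h2k)]
      congr 1
      rw [← Real.rpow_natCast (2:ℝ) k, ← Real.rpow_natCast ((2:ℝ)^β) k,
        ← Real.rpow_mul (by norm_num), ← Real.rpow_mul (by norm_num)]
      ring_nf
    rw [hbk, abs_div, abs_of_pos (by positivity : (0:ℝ) < 2 ^ (k+1))]
    rw [div_le_iff₀ (by positivity)]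
    calc |a (2 * (n * 2 ^ k)) - 2 * a (n * 2 ^ k)|
        ≤ C * ((n * 2 ^ k : ℕ) : ℝ) ^ β := hd
      _ = C * (n:ℝ) ^ β * ((2:ℝ) ^ β) ^ k := by rw [hcast]; ring
      _ = C * (n:ℝ) ^ β / 2 * r ^ k * 2 ^ (k+1) := by
          rw [hrdef, div_pow, pow_succ]
          field_simp
  have hsum : ∀ K : ℕ, |b K - b 0| ≤ C / (2 * (1 - r)) * (n:ℝ) ^ β := by
    intro K
    have htel : b K - b 0 = ∑ k ∈ Finset.range K, (b (k+1) - b k) :=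
      (Finset.sum_range_sub b K).symm
    have hgeom : ∑ k ∈ Finset.range K, r ^ k ≤ 1 / (1 - r) := by
      rw [geom_sum_eq (ne_of_lt hr1),
        show (r ^ K - 1) / (r - 1) = (1 - r ^ K) / (1 - r) by
          rw [← neg_div_neg_eq]; ring_nf]
      rw [div_le_div_iff₀ h1r h1r]
      nlinarith [pow_nonneg (le_of_lt hr0) K]
    calc |b K - b 0| = |∑ k ∈ Finset.range K, (b (k+1) - b k)| := by rw [htel]
      _ ≤ ∑ k ∈ Finset.range K, |b (k+1) - b k| := Finset.abs_sum_le_sum_abs _ _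
      _ ≤ ∑ k ∈ Finset.range K, (C * (n:ℝ) ^ β / 2) * r ^ k :=
          Finset.sum_le_sum fun k _ => hstep k
      _ = (C * (n:ℝ) ^ β / 2) * ∑ k ∈ Finset.range K, r ^ k := by
          rw [Finset.mul_sum]
      _ ≤ (C * (n:ℝ) ^ β / 2) * (1 / (1 - r)) := by
          apply mul_le_mul_of_nonneg_left hgeom (by positivity)
      _ = C / (2 * (1 - r)) * (n:ℝ) ^ β := by
          field_simp
  have hbtend : Filter.Tendsto b Filter.atTop (nhds (L * n)) := by
    have h := (hlim n hn).mul_const (n:ℝ)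
    have heq : (fun k : ℕ => a (n * 2 ^ k) / ((n:ℝ) * 2 ^ k) * n) = b := by
      funext k
      have h2k : (0:ℝ) < 2 ^ k := by positivity
      simp only [hb]
      field_simp
    rwa [heq] at h
  have hb0 : b 0 = a n := by simp [hb]
  have htend2 : Filter.Tendsto (fun K => |b K - b 0|) Filter.atTop
      (nhds (|L * n - b 0|)) := by
    exact ((hbtend.sub tendsto_const_nhds).abs)
  have := le_of_tendsto htend2 (Filter.Eventually.of_forall hsum)
  rwa [hb0] at this
end
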